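/- Let D, ℓ ∈ ℕ and let G be a (D,ℓ)-bounded finite graph, i.e., G has at most ℓ nodes of degree greater than D. Then DistToGraph_{D+k, ℓ+k}(G) ≥ k for every k ∈ ℕ ∪ {0}. -/

import Mathlib

/-!
Deleting a node only lowers degrees, while adding a node creates one new node and raises every
other degree by at most one. Hence one node-neighboring step turns at most `c` nodes of degree
`> t` into at most `c + 1` nodes of degree `> t + 1`, and after `n < k` steps from `G` at most
`ℓ + n < ℓ + k` nodes have degree `> D + k`. Since `sInf ∅ = 0`, one also needs that the
infima are over nonempty sets: any two valid graphs are joined through the empty graph, and a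
large complete graph has `ℓ + k` nodes of degree `> D + k`.
-/

/-- A finite graph: a finite vertex set together with a finite set of undirected edges. -/
structure FinGraph where
  verts : Finset ℕ
  edges : Finset (Sym2 ℕ)

namespace FinGraph

/-- A finite graph is valid if every edge is a non-loop both of whose endpoints are vertices. -/
def Valid (G : FinGraph) : Prop :=
  ∀ e ∈ G.edges, ¬ e.IsDiag ∧ ∀ v ∈ e, v ∈ G.verts

/-- The degree of a vertex: the number of edges containing it. -/
def degree (G : FinGraph) (v : ℕ) : ℕ :=
  (G.edges.filter (fun e => v ∈ e)).card

/-- Remove a node and all of its adjacent edges. -/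
def removeNode (G : FinGraph) (v : ℕ) : FinGraph :=
  ⟨G.verts.erase v, G.edges.filter (fun e => v ∉ e)⟩

end FinGraph

/-- One graph is obtained from the other by removing one node and all of its adjacent edges. -/
def nodeNeighborGraph (G G' : FinGraph) : Prop :=
  (∃ v ∈ G.verts, G' = G.removeNode v) ∨ (∃ v ∈ G'.verts, G = G'.removeNode v)

/-- The node distance: the length of a shortest chain of valid graphs from `A` to `B`
in which consecutive graphs are node-neighboring. -/
noncomputable def graphNodeDist (A B : FinGraph) : ℕ :=
  sInf {n | ∃ f : ℕ → FinGraph, f 0 = A ∧ f n = B ∧ (∀ i ≤ n, (f i).Valid) ∧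
    ∀ i < n, nodeNeighborGraph (f i) (f (i + 1))}

/-- `DistToGraph D ℓ G`: the minimum, over all valid finite graphs `H` having at least
`ℓ` nodes of degree greater than `D`, of the node distance between `G` and `H`. -/
noncomputable def DistToGraph (D ℓ : ℕ) (G : FinGraph) : ℕ :=
  sInf {n | ∃ H : FinGraph, H.Valid ∧
    ℓ ≤ (H.verts.filter fun v => D < H.degree v).card ∧ graphNodeDist G H = n}

namespace FinGraph

variable {G : FinGraph}

theorem Valid.removeNode (hG : G.Valid) (v : ℕ) : (G.removeNode v).Valid := by
  intro e he
  simp only [FinGraph.removeNode, Finset.mem_filter] at he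
  refine ⟨(hG e he.1).1, fun w hw => Finset.mem_erase.2 ⟨?_, (hG e he.1).2 w hw⟩⟩
  rintro rfl
  exact he.2 hw

theorem Valid.eq_empty_of_verts_eq_empty (hG : G.Valid) (hv : G.verts = ∅) : G = ⟨∅, ∅⟩ := by
  have he : G.edges = ∅ := Finset.eq_empty_of_forall_notMem fun e he => by
    simpa [hv] using (hG e he).2 _ (Sym2.out_fst_mem e)
  cases G
  simp_all

theorem degree_removeNode_le (G : FinGraph) (v w : ℕ) : (G.removeNode v).degree w ≤ G.degree w :=
  Finset.card_le_card fun e he => by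
    simp only [FinGraph.removeNode, Finset.mem_filter] at he ⊢
    exact ⟨he.1.1, he.2⟩

/-- The only edge through `w` that is lost is `s(v, w)`. -/
theorem degree_le_degree_removeNode_add_one (G : FinGraph) {v w : ℕ} (hvw : v ≠ w) :
    G.degree w ≤ (G.removeNode v).degree w + 1 := by
  have hsub : G.edges.filter (w ∈ ·) ⊆
      insert s(v, w) ((G.removeNode v).edges.filter (w ∈ ·)) := by
    intro e he
    rw [Finset.mem_filter] at he
    by_cases hv : v ∈ e
    · simp [(Sym2.mem_and_mem_iff hvw).1 ⟨hv, he.2⟩]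
    · simp [FinGraph.removeNode, he.1, he.2, hv]
  exact (Finset.card_le_card hsub).trans (Finset.card_insert_le _ _)

def highDegreeCount (G : FinGraph) (t : ℕ) : ℕ :=
  (G.verts.filter fun v => t < G.degree v).card

theorem highDegreeCount_antitone (G : FinGraph) : Antitone G.highDegreeCount :=
  fun _ _ hst => Finset.card_le_card fun _ hv => by
    simp only [Finset.mem_filter] at hv ⊢
    exact ⟨hv.1, hst.trans_lt hv.2⟩

theorem highDegreeCount_removeNode_le (G : FinGraph) (v t : ℕ) :
    (G.removeNode v).highDegreeCount t ≤ G.highDegreeCount t :=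
  Finset.card_le_card fun w hw => by
    simp only [Finset.mem_filter] at hw ⊢
    exact ⟨Finset.mem_of_mem_erase hw.1, hw.2.trans_le (G.degree_removeNode_le v w)⟩

theorem highDegreeCount_succ_le_removeNode (G : FinGraph) (v t : ℕ) :
    G.highDegreeCount (t + 1) ≤ (G.removeNode v).highDegreeCount t + 1 := by
  have hsub : (G.verts.filter fun w => t + 1 < G.degree w) ⊆
      insert v ((G.removeNode v).verts.filter fun w => t < (G.removeNode v).degree w) := by
    intro w hw
    rw [Finset.mem_filter] at hw
    rcases eq_or_ne w v with rfl | hwv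
    · exact Finset.mem_insert_self _ _
    · have := G.degree_le_degree_removeNode_add_one hwv.symm
      exact Finset.mem_insert_of_mem
        (Finset.mem_filter.2 ⟨Finset.mem_erase_of_ne_of_mem hwv hw.1, by omega⟩)
  exact (Finset.card_le_card hsub).trans (Finset.card_insert_le _ _)

end FinGraph

open FinGraph

theorem nodeNeighborGraph.highDegreeCount_succ_le {A B : FinGraph} (h : nodeNeighborGraph A B)
    (t : ℕ) : B.highDegreeCount (t + 1) ≤ A.highDegreeCount t + 1 := by
  rcases h with ⟨v, -, rfl⟩ | ⟨v, -, rfl⟩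
  · have := A.highDegreeCount_antitone (Nat.le_add_right t 1)
    have := A.highDegreeCount_removeNode_le v (t + 1)
    omega
  · exact B.highDegreeCount_succ_le_removeNode v t

/-- `graphNodeDist A B` is by definition `sInf {n | NodeChain A B n}`. -/
def NodeChain (A B : FinGraph) (n : ℕ) : Prop :=
  ∃ f : ℕ → FinGraph, f 0 = A ∧ f n = B ∧ (∀ i ≤ n, (f i).Valid) ∧
    ∀ i < n, nodeNeighborGraph (f i) (f (i + 1))

namespace NodeChain

variable {A B C : FinGraph} {m n : ℕ}

theorem refl (hA : A.Valid) : NodeChain A A 0 :=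
  ⟨fun _ => A, rfl, rfl, fun _ _ => hA, fun _ hi => absurd hi (Nat.not_lt_zero _)⟩

theorem single (hA : A.Valid) (hB : B.Valid) (h : nodeNeighborGraph A B) : NodeChain A B 1 := by
  refine ⟨fun i => if i = 0 then A else B, rfl, rfl, fun i _ => ?_, fun i hi => ?_⟩
  · dsimp only
    split_ifs
    exacts [hA, hB]
  · obtain rfl : i = 0 := by omega
    exact h

theorem symm (h : NodeChain A B n) : NodeChain B A n := by
  obtain ⟨f, hf0, hfn, hfv, hfs⟩ := h
  refine ⟨fun i => f (n - i), by simpa using hfn, by simpa using hf0,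
    fun i _ => hfv _ (Nat.sub_le n i), fun i hi => ?_⟩
  have := hfs (n - (i + 1)) (by omega)
  rw [show n - (i + 1) + 1 = n - i by omega] at this
  exact Or.symm this

theorem trans (hAB : NodeChain A B m) (hBC : NodeChain B C n) : NodeChain A C (m + n) := by
  obtain ⟨f, hf0, hfm, hfv, hfs⟩ := hAB
  obtain ⟨g, hg0, hgn, hgv, hgs⟩ := hBC
  have hglue : ∀ i, m ≤ i → (if i ≤ m then f i else g (i - m)) = g (i - m) := by
    intro i hi
    split_ifs with h
    · obtain rfl : i = m := le_antisymm h hi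
      simp [hfm, hg0]
    · rfl
  refine ⟨fun i => if i ≤ m then f i else g (i - m), by simp [hf0], ?_, fun i hi => ?_,
    fun i hi => ?_⟩
  · dsimp only
    rw [hglue _ (Nat.le_add_right m n), Nat.add_sub_cancel_left, hgn]
  · by_cases h : i ≤ m
    · simpa only [if_pos h] using hfv i h
    · simpa only [if_neg h] using hgv _ (by omega)
  · by_cases h : i < m
    · simpa only [if_pos h.le, if_pos (Nat.succ_le_of_lt h)] using hfs i h
    · dsimp only
      rw [hglue i (by omega), hglue (i + 1) (by omega), show i + 1 - m = i - m + 1 by omega]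
      exact hgs _ (by omega)

theorem highDegreeCount_add_le (h : NodeChain A B n) (t : ℕ) :
    B.highDegreeCount (t + n) ≤ A.highDegreeCount t + n := by
  obtain ⟨f, rfl, rfl, -, hfs⟩ := h
  suffices ∀ j ≤ n, (f j).highDegreeCount (t + j) ≤ (f 0).highDegreeCount t + j from
    this n le_rfl
  intro j hj
  induction j with
  | zero => rfl
  | succ j ih =>
    have := (hfs j hj).highDegreeCount_succ_le (t + j)
    have := ih (by omega)
    rw [← add_assoc]
    omega

end NodeChain

theorem FinGraph.Valid.nodeChain_empty {G : FinGraph} (hG : G.Valid) :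
    NodeChain G ⟨∅, ∅⟩ G.verts.card := by
  induction h : G.verts.card generalizing G with
  | zero => exact hG.eq_empty_of_verts_eq_empty (Finset.card_eq_zero.1 h) ▸ NodeChain.refl hG
  | succ n ih =>
    obtain ⟨v, hv⟩ := Finset.card_pos.1 (by omega : 0 < G.verts.card)
    have hrest := ih (hG.removeNode v) (by
      rw [FinGraph.removeNode, Finset.card_erase_of_mem hv, h, Nat.add_sub_cancel])
    rw [add_comm]
    exact (NodeChain.single hG (hG.removeNode v) (Or.inl ⟨v, hv, rfl⟩)).trans hrest

theorem nodeChain_graphNodeDist {A B : FinGraph} (hA : A.Valid) (hB : B.Valid) :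
    NodeChain A B (graphNodeDist A B) :=
  Nat.sInf_mem (s := {n | NodeChain A B n}) ⟨_, hA.nodeChain_empty.trans hB.nodeChain_empty.symm⟩

theorem le_graphNodeDist {A B : FinGraph} (hA : A.Valid) (hB : B.Valid) {D ℓ k : ℕ}
    (hAD : A.highDegreeCount D ≤ ℓ) (hBD : ℓ + k ≤ B.highDegreeCount (D + k)) :
    k ≤ graphNodeDist A B := by
  set n := graphNodeDist A B
  by_contra! hnk
  have hchain := (nodeChain_graphNodeDist hA hB).highDegreeCount_add_le (D + k - n)
  rw [Nat.sub_add_cancel (by omega)] at hchain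
  have := A.highDegreeCount_antitone (show D ≤ D + k - n by omega)
  omega

namespace FinGraph

def complete (m : ℕ) : FinGraph :=
  ⟨Finset.range m, (Finset.range m).sym2.filter fun e => ¬ e.IsDiag⟩

theorem complete_valid (m : ℕ) : (complete m).Valid := by
  intro e he
  simp only [complete, Finset.mem_filter, Finset.mem_sym2_iff] at he
  exact ⟨he.2, he.1⟩

theorem le_degree_complete {m v : ℕ} (hv : v < m) :
    m - 1 ≤ (complete m).degree v := by
  rw [← Finset.card_range m, ← Finset.card_erase_of_mem (Finset.mem_range.2 hv)]
  refine Finset.card_le_card_of_injOn (fun w => s(v, w)) (fun w hw => ?_)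
    (fun _ _ _ _ h => Sym2.congr_right.1 h)
  obtain ⟨hwv, hw⟩ := Finset.mem_erase.1 hw
  simp [complete, hv, Finset.mem_range.1 hw, hwv.symm]

theorem highDegreeCount_complete {m t : ℕ} (h : t + 1 < m) :
    (complete m).highDegreeCount t = m := by
  rw [highDegreeCount, Finset.filter_true_of_mem fun v hv => ?_]
  · exact Finset.card_range m
  · have := le_degree_complete (Finset.mem_range.1 hv)
    omega

end FinGraph

/-- If `G` is a `(D, ℓ)`-bounded valid finite graph (at most `ℓ` nodes of degree greater
than `D`), then `DistToGraph_{D+k, ℓ+k}(G) ≥ k` for every `k ∈ ℕ`. -/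
theorem distToGraph_of_bounded (D ℓ : ℕ) (G : FinGraph) (hG : G.Valid)
    (hbdd : (G.verts.filter fun v => D < G.degree v).card ≤ ℓ) (k : ℕ) :
    k ≤ DistToGraph (D + k) (ℓ + k) G := by
  set H₀ := complete (D + ℓ + 2 * k + 2)
  have hH₀ : ℓ + k ≤ H₀.highDegreeCount (D + k) := by
    rw [highDegreeCount_complete (by omega)]
    omega
  refine le_csInf ⟨_, H₀, complete_valid _, hH₀, rfl⟩ ?_
  rintro _ ⟨H, hH, hHk, rfl⟩
  exact le_graphNodeDist hG hH hbdd hHk
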